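/- There exists r* > 0 such that for every constant r₂ ∈ (0, r*) the following holds: for any function d = d(n) with 2 ≤ d(n) ≤ n−1, setting h₂(n) = √(1 − (r₂ d/n)^{2(d+1)/(d−1)²}), one has F(n,d,h₂(n),1) → 0 as n → ∞. -/

import Mathlib

open Filter

noncomputable def c1 (d : ℕ) : ℝ :=
  Real.Gamma ((d : ℝ) / 2) / (Real.sqrt Real.pi * Real.Gamma (((d : ℝ) - 1) / 2))

noncomputable def c2 (d : ℕ) : ℝ :=
  Real.Gamma (((d : ℝ) ^ 2 - 2 * (d : ℝ) + 2) / 2) /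
    (Real.sqrt Real.pi * Real.Gamma (((d : ℝ) ^ 2 - 2 * (d : ℝ) + 1) / 2))

/-- `II n d a b` is the integral `I(n,d,a,b)` from the paper. -/
noncomputable def II (n d : ℕ) (a b : ℝ) : ℝ :=
  ∫ h in a..b, (1 - h ^ 2) ^ (((d : ℝ) ^ 2 - 2 * (d : ℝ) - 1) / 2) *
    (c1 d * ∫ s in (-1 : ℝ)..h, (1 - s ^ 2) ^ (((d : ℝ) - 3) / 2)) ^ (n - d)

/-- `FF n d a b` is the expected number of facets with height in `[a,b]`. -/
noncomputable def FF (n d : ℕ) (a b : ℝ) : ℝ :=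
  (n.choose d : ℝ) * 2 * c2 d * II n d a b

/-- The standard normal CDF. -/
noncomputable def stdPhi (r : ℝ) : ℝ :=
  (Real.sqrt (2 * Real.pi))⁻¹ * ∫ s in Set.Iic r, Real.exp (-s ^ 2 / 2)

open MeasureTheory intervalIntegral Set

lemma intInt_one_sub_sq {q : ℝ} (hq : -1 < q) :
    IntervalIntegrable (fun s : ℝ => (1 - s ^ 2) ^ q) volume (-1) 1 := by
  have h1 : IntervalIntegrable (fun s : ℝ => (1 + s) ^ q * (1 - s) ^ q) volume (-1) 0 := by
    have hbase : IntervalIntegrable (fun s : ℝ => (1 + s) ^ q) volume (-1) 0 := by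
      have := (intervalIntegrable_rpow' (a := 0) (b := 1) hq).comp_add_right 1
      simpa [add_comm] using this
    refine hbase.mul_continuousOn ?_
    apply ContinuousOn.rpow_const
    · exact (continuous_const.sub continuous_id).continuousOn
    · intro x hx
      simp [uIcc_of_le (by norm_num : (-1:ℝ) ≤ 0)] at hx
      left; nlinarith [hx.1, hx.2]
  have h2 : IntervalIntegrable (fun s : ℝ => (1 - s) ^ q * (1 + s) ^ q) volume 0 1 := by
    have hbase : IntervalIntegrable (fun s : ℝ => (1 - s) ^ q) volume 0 1 := by
      have := ((intervalIntegrable_rpow' (a := 0) (b := 1) hq).comp_sub_left 1).symm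
      simpa using this
    refine hbase.mul_continuousOn ?_
    apply ContinuousOn.rpow_const
    · exact (continuous_const.add continuous_id).continuousOn
    · intro x hx
      simp [uIcc_of_le (by norm_num : (0:ℝ) ≤ 1)] at hx
      left; nlinarith [hx.1, hx.2]
  have key : ∀ x : ℝ, -1 ≤ x → x ≤ 1 → (1 + x) ^ q * (1 - x) ^ q = (1 - x ^ 2) ^ q := by
    intro x hx1 hx2
    rw [← Real.mul_rpow (by linarith) (by linarith)]
    congr 1; ring
  have e1 : IntervalIntegrable (fun s : ℝ => (1 - s ^ 2) ^ q) volume (-1) 0 := by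
    rw [intervalIntegrable_iff] at h1 ⊢
    refine h1.congr_fun ?_ measurableSet_uIoc
    intro x hx
    rw [uIoc_of_le (by norm_num : (-1:ℝ) ≤ 0)] at hx
    exact key x (le_of_lt hx.1) (by linarith [hx.2])
  have e2 : IntervalIntegrable (fun s : ℝ => (1 - s ^ 2) ^ q) volume 0 1 := by
    rw [intervalIntegrable_iff] at h2 ⊢
    refine h2.congr_fun ?_ measurableSet_uIoc
    intro x hx
    rw [uIoc_of_le (by norm_num : (0:ℝ) ≤ 1)] at hx
    simp only []
    rw [mul_comm]
    exact key x (by linarith [hx.1]) hx.2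
  exact e1.trans e2

lemma J_eq {q : ℝ} (hq : -1 < q) :
    ∫ s in (-1:ℝ)..1, (1 - s ^ 2) ^ q
      = Real.sqrt Real.pi * Real.Gamma (q+1) / Real.Gamma (q+3/2) := by
  have hq1 : (0:ℝ) < q + 1 := by linarith
  have hq32 : (0:ℝ) < q + 3/2 := by linarith
  -- the interval beta integral
  set IB : ℝ := ∫ x in (0:ℝ)..1, x ^ (-1/2 : ℝ) * (1-x) ^ q with hIB
  -- complex beta
  have hBeta : Complex.betaIntegral (1/2) ((q:ℂ)+1) = (IB : ℂ) := by
    rw [Complex.betaIntegral, hIB, ← intervalIntegral.integral_ofReal]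
    apply integral_congr
    intro x hx
    rw [uIcc_of_le (by norm_num : (0:ℝ) ≤ 1)] at hx
    dsimp only
    have h1 : ((1:ℂ)/2 - 1) = ((-1/2 : ℝ) : ℂ) := by norm_num
    have h2 : ((q:ℂ) + 1 - 1) = ((q : ℝ) : ℂ) := by ring
    rw [h1, h2, ← Complex.ofReal_cpow hx.1, ← Complex.ofReal_one, ← Complex.ofReal_sub,
      ← Complex.ofReal_cpow (by linarith [hx.2] : (0:ℝ) ≤ 1 - x), ← Complex.ofReal_mul]
  have hGamma : Real.sqrt Real.pi * Real.Gamma (q+1) = Real.Gamma (q+3/2) * IB := by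
    have hc := Complex.Gamma_mul_Gamma_eq_betaIntegral
      (s := 1/2) (t := (q:ℂ)+1) (by norm_num) (by simp; linarith)
    rw [hBeta] at hc
    have e12 : (1/2 : ℂ) = ((1/2 : ℝ) : ℂ) := by norm_num
    have eq1 : ((q:ℂ)+1) = ((q+1 : ℝ) : ℂ) := by push_cast; ring
    have eq2 : ((1/2 : ℝ) : ℂ) + ((q+1 : ℝ) : ℂ) = ((q+3/2 : ℝ) : ℂ) := by push_cast; ring
    rw [e12, eq1, eq2] at hc
    rw [Complex.Gamma_ofReal, Complex.Gamma_ofReal, Complex.Gamma_ofReal] at hc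
    rw [← Complex.ofReal_mul, ← Complex.ofReal_mul] at hc
    have := Complex.ofReal_inj.mp hc
    rw [← this, Real.Gamma_one_half_eq]
  -- change of variables
  have himg : (fun y : ℝ => y^2) '' Ioo 0 1 = Ioo (0:ℝ) 1 := by
    ext y
    constructor
    · rintro ⟨x, hx, rfl⟩
      refine ⟨pow_pos hx.1 2, ?_⟩
      show x ^ 2 < 1
      nlinarith [hx.1, hx.2]
    · rintro ⟨hy0, hy1⟩
      refine ⟨Real.sqrt y, ⟨Real.sqrt_pos.mpr hy0, ?_⟩, Real.sq_sqrt hy0.le⟩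
      rw [show (1:ℝ) = Real.sqrt 1 by simp]
      exact Real.sqrt_lt_sqrt hy0.le hy1
  have hinj : InjOn (fun y : ℝ => y^2) (Ioo 0 1) := by
    intro a ha b hb h
    simp only at h
    nlinarith [ha.1, hb.1]
  have cov := integral_image_eq_integral_abs_deriv_smul (f := fun y : ℝ => y^2)
    (f' := fun y : ℝ => 2*y) measurableSet_Ioo
    (fun x _ => by simpa using (hasDerivAt_pow 2 x).hasDerivWithinAt) hinj
    (fun u : ℝ => u ^ (-1/2 : ℝ) * (1-u) ^ q)
  rw [himg] at cov
  have cov2 : ∫ u in Ioo (0:ℝ) 1, u ^ (-1/2 : ℝ) * (1-u) ^ q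
      = ∫ x in Ioo (0:ℝ) 1, 2 * (1 - x^2) ^ q := by
    rw [cov]
    apply setIntegral_congr_fun measurableSet_Ioo
    intro x hx
    have hx0 : (0:ℝ) < x := hx.1
    have : ((x^2 : ℝ)) ^ (-1/2 : ℝ) = x⁻¹ := by
      rw [← Real.rpow_natCast x 2, ← Real.rpow_mul hx0.le]
      norm_num
      exact (Real.rpow_neg_one x)
    simp only [smul_eq_mul]
    rw [this]
    rw [abs_of_pos (by linarith)]
    field_simp
  -- symmetry: integral over -1..1 is twice over 0..1
  have i01 : IntervalIntegrable (fun s : ℝ => (1 - s ^ 2) ^ q) volume 0 1 :=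
    (intInt_one_sub_sq hq).mono_set (by rw [uIcc_of_le (by norm_num : (0:ℝ) ≤ 1),
      uIcc_of_le (by norm_num : (-1:ℝ) ≤ 1)]; exact Icc_subset_Icc (by norm_num) le_rfl)
  have im10 : IntervalIntegrable (fun s : ℝ => (1 - s ^ 2) ^ q) volume (-1) 0 :=
    (intInt_one_sub_sq hq).mono_set (by rw [uIcc_of_le (by norm_num : (-1:ℝ) ≤ 0),
      uIcc_of_le (by norm_num : (-1:ℝ) ≤ 1)]; exact Icc_subset_Icc le_rfl (by norm_num))
  have hsplit : (∫ s in (-1:ℝ)..1, (1 - s ^ 2) ^ q)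
      = (∫ s in (-1:ℝ)..0, (1 - s ^ 2) ^ q) + ∫ s in (0:ℝ)..1, (1 - s ^ 2) ^ q :=
    (integral_add_adjacent_intervals im10 i01).symm
  have heven : (∫ s in (-1:ℝ)..0, (1 - s ^ 2) ^ q) = ∫ s in (0:ℝ)..1, (1 - s ^ 2) ^ q := by
    have := integral_comp_neg (a := (0:ℝ)) (b := 1) (fun s : ℝ => (1 - s ^ 2) ^ q)
    simp only [neg_sq] at this
    rw [show (-0:ℝ) = 0 by norm_num] at this
    exact this.symm
  -- IB as set integral
  have hIBset : IB = ∫ u in Ioo (0:ℝ) 1, u ^ (-1/2 : ℝ) * (1-u) ^ q := by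
    rw [hIB, integral_of_le (by norm_num : (0:ℝ) ≤ 1), integral_Ioc_eq_integral_Ioo]
  have h01set : (∫ s in (0:ℝ)..1, (1 - s ^ 2) ^ q) = ∫ x in Ioo (0:ℝ) 1, (1 - x^2) ^ q := by
    rw [integral_of_le (by norm_num : (0:ℝ) ≤ 1), integral_Ioc_eq_integral_Ioo]
  have hIB2 : IB = 2 * ∫ s in (0:ℝ)..1, (1 - s ^ 2) ^ q := by
    rw [hIBset, cov2, h01set, ← MeasureTheory.integral_const_mul]
  have hg : Real.Gamma (q+3/2) ≠ 0 := (Real.Gamma_pos_of_pos hq32).ne'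
  rw [hsplit, heven, ← two_mul, ← hIB2, eq_div_iff hg]
  linarith [hGamma]

lemma sqrt_pi_pos : 0 < Real.sqrt Real.pi := Real.sqrt_pos.mpr Real.pi_pos

lemma c1_pos {d : ℕ} (hd : 2 ≤ d) : 0 < c1 d := by
  have hd2 : (2:ℝ) ≤ (d:ℝ) := by exact_mod_cast hd
  apply div_pos (Real.Gamma_pos_of_pos (by linarith))
  exact mul_pos sqrt_pi_pos (Real.Gamma_pos_of_pos (by linarith))

lemma c1_mul_J {d : ℕ} (hd : 2 ≤ d) :
    c1 d * ∫ s in (-1:ℝ)..1, (1 - s ^ 2) ^ (((d:ℝ)-3)/2) = 1 := by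
  have hd2 : (2:ℝ) ≤ (d:ℝ) := by exact_mod_cast hd
  have hq : -1 < ((d:ℝ)-3)/2 := by linarith
  rw [J_eq hq]
  have e1 : ((d:ℝ)-3)/2 + 1 = ((d:ℝ)-1)/2 := by ring
  have e2 : ((d:ℝ)-3)/2 + 3/2 = (d:ℝ)/2 := by ring
  rw [e1, e2, c1]
  have g1 : 0 < Real.Gamma ((d:ℝ)/2) := Real.Gamma_pos_of_pos (by linarith)
  have g2 : 0 < Real.Gamma (((d:ℝ)-1)/2) := Real.Gamma_pos_of_pos (by linarith)
  field_simp

lemma inner_nonneg {d : ℕ} (hd : 2 ≤ d) {h : ℝ} (h1 : -1 ≤ h) (h2 : h ≤ 1) :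
    0 ≤ c1 d * ∫ s in (-1:ℝ)..h, (1 - s ^ 2) ^ (((d:ℝ)-3)/2) := by
  apply mul_nonneg (c1_pos hd).le
  apply intervalIntegral.integral_nonneg h1
  intro u hu
  apply Real.rpow_nonneg
  nlinarith [hu.1, hu.2]

lemma inner_le_one {d : ℕ} (hd : 2 ≤ d) {h : ℝ} (h1 : -1 ≤ h) (h2 : h ≤ 1) :
    c1 d * ∫ s in (-1:ℝ)..h, (1 - s ^ 2) ^ (((d:ℝ)-3)/2) ≤ 1 := by
  have hd2 : (2:ℝ) ≤ (d:ℝ) := by exact_mod_cast hd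
  have hq : -1 < ((d:ℝ)-3)/2 := by linarith
  have hsub1 : IntervalIntegrable (fun s : ℝ => (1 - s ^ 2) ^ (((d:ℝ)-3)/2)) volume (-1) h :=
    (intInt_one_sub_sq hq).mono_set (by
      rw [uIcc_of_le h1, uIcc_of_le (by norm_num : (-1:ℝ) ≤ 1)]
      exact Icc_subset_Icc le_rfl h2)
  have hsub2 : IntervalIntegrable (fun s : ℝ => (1 - s ^ 2) ^ (((d:ℝ)-3)/2)) volume h 1 :=
    (intInt_one_sub_sq hq).mono_set (by
      rw [uIcc_of_le h2, uIcc_of_le (by norm_num : (-1:ℝ) ≤ 1)]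
      exact Icc_subset_Icc h1 le_rfl)
  have hle : (∫ s in (-1:ℝ)..h, (1 - s ^ 2) ^ (((d:ℝ)-3)/2))
      ≤ ∫ s in (-1:ℝ)..1, (1 - s ^ 2) ^ (((d:ℝ)-3)/2) := by
    rw [← intervalIntegral.integral_add_adjacent_intervals hsub1 hsub2]
    have : 0 ≤ ∫ s in h..(1:ℝ), (1 - s ^ 2) ^ (((d:ℝ)-3)/2) := by
      apply intervalIntegral.integral_nonneg h2
      intro u hu
      apply Real.rpow_nonneg
      nlinarith [hu.1, hu.2]
    linarith
  calc c1 d * ∫ s in (-1:ℝ)..h, (1 - s ^ 2) ^ (((d:ℝ)-3)/2)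
      ≤ c1 d * ∫ s in (-1:ℝ)..1, (1 - s ^ 2) ^ (((d:ℝ)-3)/2) :=
        mul_le_mul_of_nonneg_left hle (c1_pos hd).le
    _ = 1 := c1_mul_J hd

lemma c2_pos {d : ℕ} (hd : 2 ≤ d) : 0 < c2 d := by
  have hd2 : (2:ℝ) ≤ (d:ℝ) := by exact_mod_cast hd
  apply div_pos (Real.Gamma_pos_of_pos (by nlinarith))
  exact mul_pos sqrt_pi_pos (Real.Gamma_pos_of_pos (by nlinarith))

lemma c2_le {d : ℕ} (hd : 2 ≤ d) : c2 d ≤ (d : ℝ) := by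
  have hd2 : (2:ℝ) ≤ (d:ℝ) := by exact_mod_cast hd
  set a : ℝ := ((d : ℝ) ^ 2 - 2 * (d : ℝ) + 1) / 2 with ha
  have ha0 : (1:ℝ)/2 ≤ a := by rw [ha]; nlinarith
  have hapos : 0 < a := by linarith
  have gpos : 0 < Real.Gamma a := Real.Gamma_pos_of_pos hapos
  have gpos2 : 0 < Real.Gamma (a + 1) := Real.Gamma_pos_of_pos (by linarith)
  have gpos3 : 0 < Real.Gamma (a + 1/2) := Real.Gamma_pos_of_pos (by linarith)
  have key : Real.Gamma (a + 1/2) ≤ Real.sqrt a * Real.Gamma a := by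
    have hconv := Real.convexOn_log_Gamma
    have hc := hconv.2 (show a ∈ Ioi (0:ℝ) from hapos)
      (show a + 1 ∈ Ioi (0:ℝ) by simp only [mem_Ioi]; linarith)
      (by norm_num : (0:ℝ) ≤ 1/2) (by norm_num : (0:ℝ) ≤ 1/2) (by norm_num)
    simp only [Function.comp, smul_eq_mul] at hc
    rw [show (1/2 : ℝ) * a + (1/2 : ℝ) * (a + 1) = a + 1/2 by ring] at hc
    have hmono := Real.exp_le_exp.mpr hc
    rw [Real.exp_log gpos3] at hmono
    have hrhs : Real.exp (1/2 * Real.log (Real.Gamma a) + 1/2 * Real.log (Real.Gamma (a+1)))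
        = Real.sqrt (Real.Gamma a * Real.Gamma (a+1)) := by
      rw [← Real.exp_log (Real.sqrt_pos.mpr (mul_pos gpos gpos2)),
        Real.log_sqrt (mul_pos gpos gpos2).le,
        Real.log_mul gpos.ne' gpos2.ne']
      ring_nf
    rw [hrhs] at hmono
    rw [Real.Gamma_add_one hapos.ne'] at hmono
    calc Real.Gamma (a + 1/2) ≤ Real.sqrt (Real.Gamma a * (a * Real.Gamma a)) := hmono
      _ = Real.sqrt (a * (Real.Gamma a * Real.Gamma a)) := by ring_nf
      _ = Real.sqrt a * Real.Gamma a := by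
          rw [Real.sqrt_mul hapos.le, Real.sqrt_mul_self gpos.le]
  have hnum : ((d : ℝ) ^ 2 - 2 * (d : ℝ) + 2) / 2 = a + 1/2 := by rw [ha]; ring
  have hsqa : Real.sqrt a ≤ (d : ℝ) := by
    calc Real.sqrt a ≤ Real.sqrt ((d:ℝ)^2) := Real.sqrt_le_sqrt (by nlinarith)
      _ = (d : ℝ) := Real.sqrt_sq (by positivity)
  calc c2 d = Real.Gamma (a + 1/2) / (Real.sqrt Real.pi * Real.Gamma a) := by
        rw [c2, hnum, ha]
    _ ≤ (Real.sqrt a * Real.Gamma a) / (Real.sqrt Real.pi * Real.Gamma a) := by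
        gcongr
    _ = Real.sqrt a / Real.sqrt Real.pi := by
        rw [mul_comm (Real.sqrt Real.pi), ← div_div, mul_div_assoc,
          div_self gpos.ne', mul_one]
    _ ≤ Real.sqrt a := by
        apply div_le_self (Real.sqrt_nonneg a)
        rw [show (1:ℝ) = Real.sqrt 1 by simp]
        exact Real.sqrt_le_sqrt (by linarith [Real.pi_gt_three])
    _ ≤ (d : ℝ) := hsqa

lemma II_nonneg {n d : ℕ} (hd : 2 ≤ d) {t : ℝ} (ht0 : 0 ≤ t) (ht1 : t ≤ 1) :
    0 ≤ II n d (Real.sqrt (1 - t)) 1 := by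
  have h21 : Real.sqrt (1 - t) ≤ 1 := by
    have := Real.sqrt_le_sqrt (show 1 - t ≤ 1 by linarith)
    simpa using this
  apply intervalIntegral.integral_nonneg h21
  intro u hu
  have hu0 : 0 ≤ u := le_trans (Real.sqrt_nonneg _) hu.1
  apply mul_nonneg
  · apply Real.rpow_nonneg; nlinarith [hu.2]
  · exact pow_nonneg (inner_nonneg hd (by linarith) hu.2) _

lemma II_le {n d : ℕ} (hd : 2 ≤ d) {t : ℝ} (ht0 : 0 < t) (ht1 : t ≤ 1) :
    II n d (Real.sqrt (1 - t)) 1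
      ≤ 2 * t ^ (((d : ℝ) ^ 2 - 2 * (d : ℝ) + 1) / 2) := by
  have hd2 : (2:ℝ) ≤ (d:ℝ) := by exact_mod_cast hd
  set p : ℝ := ((d : ℝ) ^ 2 - 2 * (d : ℝ) - 1) / 2 with hp
  have hp_half : 0 ≤ p + 1/2 := by rw [hp]; nlinarith
  have hp_ne : p ≠ 0 := by
    rw [hp]
    rcases eq_or_lt_of_le hd2 with h | h
    · rw [← h]; norm_num
    · have : (3:ℝ) ≤ (d:ℝ) := by
        have : 3 ≤ d := by exact_mod_cast Nat.succ_le_of_lt (by exact_mod_cast h)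
        exact_mod_cast this
      nlinarith
  have hpgt : -1 < p := by rw [hp]; nlinarith
  set h₂ : ℝ := Real.sqrt (1 - t) with hh2
  have h20 : 0 ≤ h₂ := Real.sqrt_nonneg _
  have h21 : h₂ ≤ 1 := by
    have := Real.sqrt_le_sqrt (show 1 - t ≤ 1 by linarith)
    simpa [hh2] using this
  have hsq : h₂ ^ 2 = 1 - t := Real.sq_sqrt (by linarith)
  set g : ℝ → ℝ := fun h => t ^ (p + 1/2) * (1 - h) ^ (-1/2 : ℝ) with hg
  -- pointwise bound
  have hpt : ∀ h ∈ Icc h₂ 1,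
      (1 - h ^ 2) ^ p *
        (c1 d * ∫ s in (-1 : ℝ)..h, (1 - s ^ 2) ^ (((d : ℝ) - 3) / 2)) ^ (n - d) ≤ g h := by
    intro h hh
    have hh0 : 0 ≤ h := le_trans h20 hh.1
    rcases eq_or_lt_of_le hh.2 with h1 | h1
    · rw [h1]
      simp only [one_pow, sub_self, hg]
      rw [Real.zero_rpow hp_ne, Real.zero_rpow (by norm_num : (-1/2 : ℝ) ≠ 0)]
      simp
    · have hb0 : 0 < 1 - h ^ 2 := by nlinarith
      have hinner : (c1 d * ∫ s in (-1 : ℝ)..h, (1 - s ^ 2) ^ (((d : ℝ) - 3) / 2)) ^ (n - d) ≤ 1 :=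
        pow_le_one₀ (inner_nonneg hd (by linarith) hh.2) (inner_le_one hd (by linarith) hh.2)
      calc (1 - h ^ 2) ^ p *
            (c1 d * ∫ s in (-1 : ℝ)..h, (1 - s ^ 2) ^ (((d : ℝ) - 3) / 2)) ^ (n - d)
          ≤ (1 - h ^ 2) ^ p * 1 := by
            apply mul_le_mul_of_nonneg_left hinner (Real.rpow_nonneg hb0.le _)
        _ = (1 - h ^ 2) ^ (p + 1/2) * (1 - h ^ 2) ^ (-1/2 : ℝ) := by
            rw [mul_one, ← Real.rpow_add hb0]
            norm_num
        _ ≤ t ^ (p + 1/2) * (1 - h) ^ (-1/2 : ℝ) := by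
            apply mul_le_mul
            · apply Real.rpow_le_rpow hb0.le ?_ hp_half
              nlinarith [hh.1, Real.sq_sqrt (show (0:ℝ) ≤ 1 - t by linarith),
                pow_le_pow_left₀ h20 hh.1 2]
            · apply Real.rpow_le_rpow_of_nonpos (by linarith) (by nlinarith) (by norm_num)
            · exact Real.rpow_nonneg hb0.le _
            · exact Real.rpow_nonneg ht0.le _
  -- integrability of the integrand
  have hq : -1 < ((d:ℝ)-3)/2 := by linarith
  have hcont : ContinuousOn
      (fun h : ℝ => (c1 d * ∫ s in (-1 : ℝ)..h, (1 - s ^ 2) ^ (((d : ℝ) - 3) / 2)) ^ (n - d))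
      (uIcc h₂ 1) := by
    have hprim : ContinuousOn (fun h : ℝ => ∫ s in (-1 : ℝ)..h, (1 - s ^ 2) ^ (((d : ℝ) - 3) / 2))
        (uIcc (-1 : ℝ) 1) :=
      intervalIntegral.continuousOn_primitive_interval' (intInt_one_sub_sq hq)
        (by rw [uIcc_of_le (by norm_num : (-1:ℝ) ≤ 1)]; exact ⟨le_rfl, by norm_num⟩)
    have hsub : uIcc h₂ 1 ⊆ uIcc (-1 : ℝ) 1 := by
      rw [uIcc_of_le h21, uIcc_of_le (by norm_num : (-1:ℝ) ≤ 1)]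
      exact Icc_subset_Icc (by linarith) le_rfl
    exact ((continuousOn_const.mul (hprim.mono hsub)).pow _)
  have hf_int : IntervalIntegrable
      (fun h : ℝ => (1 - h ^ 2) ^ p *
        (c1 d * ∫ s in (-1 : ℝ)..h, (1 - s ^ 2) ^ (((d : ℝ) - 3) / 2)) ^ (n - d))
      volume h₂ 1 := by
    apply IntervalIntegrable.mul_continuousOn ?_ hcont
    exact (intInt_one_sub_sq hpgt).mono_set (by
      rw [uIcc_of_le h21, uIcc_of_le (by norm_num : (-1:ℝ) ≤ 1)]
      exact Icc_subset_Icc (by linarith) le_rfl)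
  have hg_int : IntervalIntegrable g volume h₂ 1 := by
    apply IntervalIntegrable.const_mul
    have := (intervalIntegrable_rpow' (a := 0) (b := 1 - h₂)
      (by norm_num : (-1:ℝ) < -1/2)).comp_sub_left 1
    simpa using this.symm
  -- the integral of g
  have hg_val : ∫ h in h₂..1, g h = t ^ (p + 1/2) * (2 * (1 - h₂) ^ (1/2 : ℝ)) := by
    rw [hg, intervalIntegral.integral_const_mul]
    congr 1
    have hcs := intervalIntegral.integral_comp_sub_left (a := h₂) (b := 1)
      (fun u : ℝ => u ^ (-1/2 : ℝ)) 1
    rw [hcs, show (1:ℝ) - 1 = 0 by norm_num]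
    rw [integral_rpow (Or.inl (by norm_num : (-1:ℝ) < -1/2))]
    rw [Real.zero_rpow (by norm_num : (-1/2 + 1 : ℝ) ≠ 0)]
    norm_num
    ring
  calc II n d h₂ 1 ≤ ∫ h in h₂..1, g h :=
        intervalIntegral.integral_mono_on h21 hf_int hg_int hpt
    _ = t ^ (p + 1/2) * (2 * (1 - h₂) ^ (1/2 : ℝ)) := hg_val
    _ ≤ t ^ (p + 1/2) * (2 * t ^ (1/2 : ℝ)) := by
        apply mul_le_mul_of_nonneg_left ?_ (Real.rpow_nonneg ht0.le _)
        apply mul_le_mul_of_nonneg_left ?_ (by norm_num)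
        apply Real.rpow_le_rpow (by linarith) ?_ (by norm_num)
        nlinarith [hsq, h20, h21]
    _ = 2 * t ^ (((d : ℝ) ^ 2 - 2 * (d : ℝ) + 1) / 2) := by
        rw [mul_comm, mul_assoc, ← Real.rpow_add ht0, hp]
        congr 1
        ring

lemma key_ineq {D : ℕ} (hD : 2 ≤ D) {r₂ : ℝ} (hr0 : 0 < r₂)
    (hre : r₂ * Real.exp 1 ≤ 1/4) :
    r₂ ^ (D+1) * (D : ℝ) ^ (D+2) ≤ r₂ * (D.factorial : ℝ) := by
  have hDf : (0:ℝ) < (D.factorial : ℝ) := by exact_mod_cast D.factorial_pos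
  have h1 : (D:ℝ) ^ D ≤ Real.exp 1 ^ D * (D.factorial : ℝ) := by
    have := Real.pow_div_factorial_le_exp (x := (D:ℝ)) (by positivity) D
    rw [div_le_iff₀ hDf] at this
    rwa [Real.exp_one_pow]
  have h2 : (D:ℝ) ^ 2 ≤ (4:ℝ) ^ D := by
    have hlt : (D:ℝ) ≤ (2:ℝ) ^ D := by
      exact_mod_cast (Nat.lt_two_pow_self (n := D)).le
    calc (D:ℝ) ^ 2 ≤ ((2:ℝ) ^ D) ^ 2 := by
          apply pow_le_pow_left₀ (by positivity) hlt
      _ = ((2:ℝ) ^ 2) ^ D := by rw [← pow_mul, ← pow_mul, Nat.mul_comm]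
      _ = (4:ℝ) ^ D := by norm_num
  have h3 : (r₂ * Real.exp 1) ^ D ≤ ((1:ℝ)/4) ^ D := by
    apply pow_le_pow_left₀ (by positivity) hre
  have h4 : (r₂ * Real.exp 1) ^ D * (D:ℝ)^2 ≤ 1 := by
    calc (r₂ * Real.exp 1) ^ D * (D:ℝ)^2 ≤ ((1:ℝ)/4) ^ D * (4:ℝ) ^ D := by
          apply mul_le_mul h3 h2 (by positivity) (by positivity)
      _ = 1 := by rw [← mul_pow]; norm_num
  calc r₂ ^ (D+1) * (D : ℝ) ^ (D+2)
      = (r₂ * r₂ ^ D) * ((D:ℝ)^2 * (D:ℝ)^D) := by ring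
    _ ≤ (r₂ * r₂ ^ D) * ((D:ℝ)^2 * (Real.exp 1 ^ D * (D.factorial : ℝ))) := by
        apply mul_le_mul_of_nonneg_left ?_ (by positivity)
        apply mul_le_mul_of_nonneg_left h1 (by positivity)
    _ = (r₂ * (D.factorial : ℝ)) * ((r₂ * Real.exp 1) ^ D * (D:ℝ)^2) := by
        rw [mul_pow]; ring
    _ ≤ (r₂ * (D.factorial : ℝ)) * 1 := by
        apply mul_le_mul_of_nonneg_left h4 (by positivity)
    _ = r₂ * (D.factorial : ℝ) := by ring

/-- there is a threshold `r*` such that for every `0 < r₂ < r*` and every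
dimension function `d` with `2 ≤ d(n) ≤ n-1`, the expected number of facets of height at
least `h₂ = √(1-(r₂ d/n)^{2(d+1)/(d-1)²})` tends to zero. -/
theorem facet_range_upper_general :
    ∃ rstar : ℝ, 0 < rstar ∧
      ∀ r₂ : ℝ, 0 < r₂ → r₂ < rstar →
        ∀ d : ℕ → ℕ, (∀ᶠ n in atTop, 2 ≤ d n ∧ d n < n) →
          Tendsto (fun n : ℕ =>
              FF n (d n)
                (Real.sqrt (1 - (r₂ * (d n : ℝ) / (n : ℝ)) ^
                  (2 * ((d n : ℝ) + 1) / ((d n : ℝ) - 1) ^ 2))) 1)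
            atTop (nhds 0) := by
  refine ⟨(4 * Real.exp 1)⁻¹, by positivity, ?_⟩
  intro r₂ hr0 hr1 d hd
  have hre : r₂ * Real.exp 1 ≤ 1/4 := by
    have he : (0:ℝ) < Real.exp 1 := Real.exp_pos 1
    have : r₂ ≤ (4 * Real.exp 1)⁻¹ := hr1.le
    calc r₂ * Real.exp 1 ≤ (4 * Real.exp 1)⁻¹ * Real.exp 1 :=
          mul_le_mul_of_nonneg_right this he.le
      _ = 1/4 := by field_simp
  have hr2lt1 : r₂ < 1 := by
    have he : (1:ℝ) ≤ Real.exp 1 := by linarith [Real.add_one_le_exp 1]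
    nlinarith
  -- the upper bound function
  have hbound : ∀ᶠ n in atTop, FF n (d n)
      (Real.sqrt (1 - (r₂ * (d n : ℝ) / (n : ℝ)) ^
        (2 * ((d n : ℝ) + 1) / ((d n : ℝ) - 1) ^ 2))) 1 ≤ 4 * r₂ / (n : ℝ) := by
    filter_upwards [hd] with n hn
    obtain ⟨hd2, hdn⟩ := hn
    set D := d n with hD
    have hD2 : (2:ℝ) ≤ (D:ℝ) := by exact_mod_cast hd2
    have hn3 : 3 ≤ n := by omega
    have hN : (0:ℝ) < (n:ℝ) := by
      have : 0 < n := by omega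
      exact_mod_cast this
    have hDN : (D:ℝ) < (n:ℝ) := by exact_mod_cast hdn
    set x : ℝ := r₂ * (D : ℝ) / (n : ℝ) with hx
    have hx0 : 0 < x := by rw [hx]; positivity
    have hx1 : x < 1 := by
      rw [hx, div_lt_one hN]
      nlinarith
    set e₀ : ℝ := 2 * ((D : ℝ) + 1) / ((D : ℝ) - 1) ^ 2 with he0
    have he0pos : 0 < e₀ := by
      rw [he0]; apply div_pos (by linarith) (by nlinarith)
    set t : ℝ := x ^ e₀ with ht
    have ht0 : 0 < t := Real.rpow_pos_of_pos hx0 _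
    have ht1 : t ≤ 1 := Real.rpow_le_one hx0.le hx1.le he0pos.le
    have hII := II_le (n := n) hd2 ht0 ht1
    have hIIpos := II_nonneg (n := n) hd2 ht0.le ht1
    set E : ℝ := ((D : ℝ) ^ 2 - 2 * (D : ℝ) + 1) / 2 with hE
    -- t ^ E = x ^ (D+1)
    have htE : t ^ E = x ^ (D+1) := by
      rw [ht, ← Real.rpow_mul hx0.le]
      have : e₀ * E = ((D:ℝ) + 1) := by
        rw [he0, hE]
        have hne : ((D:ℝ) - 1) ^ 2 ≠ 0 := by nlinarith
        rw [div_mul_div_comm, div_eq_iff (mul_ne_zero hne two_ne_zero)]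
        ring
      rw [this, show ((D:ℝ) + 1) = ((D + 1 : ℕ) : ℝ) by push_cast; ring,
        Real.rpow_natCast]
    have hfac : (0:ℝ) < (D.factorial : ℝ) := by exact_mod_cast D.factorial_pos
    have hc2 : c2 D ≤ (D : ℝ) := c2_le hd2
    have hc2nn : 0 ≤ c2 D := (c2_pos hd2).le
    have hchoose : (n.choose D : ℝ) ≤ (n:ℝ) ^ D / (D.factorial : ℝ) :=
      Nat.choose_le_pow_div D n
    have hxpow : x ^ (D+1) = r₂ ^ (D+1) * (D:ℝ) ^ (D+1) / (n:ℝ) ^ (D+1) := by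
      rw [hx, div_pow, mul_pow]
    have step1 : FF n D (Real.sqrt (1 - t)) 1
        ≤ ((n:ℝ) ^ D / (D.factorial : ℝ)) * 2 * (D:ℝ) * (2 * x ^ (D+1)) := by
      rw [FF]
      calc (n.choose D : ℝ) * 2 * c2 D * II n D (Real.sqrt (1 - t)) 1
          ≤ (n.choose D : ℝ) * 2 * c2 D * (2 * t ^ E) := by
            apply mul_le_mul_of_nonneg_left hII (by positivity)
        _ = (n.choose D : ℝ) * 2 * c2 D * (2 * x ^ (D+1)) := by rw [htE]
        _ ≤ ((n:ℝ) ^ D / (D.factorial : ℝ)) * 2 * (D:ℝ) * (2 * x ^ (D+1)) := by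
            have hXnn : 0 ≤ 2 * x ^ (D+1) := by positivity
            apply mul_le_mul_of_nonneg_right ?_ hXnn
            apply mul_le_mul (by
              apply mul_le_mul_of_nonneg_right hchoose (by norm_num)) hc2
              hc2nn (by positivity)
    have step2 : ((n:ℝ) ^ D / (D.factorial : ℝ)) * 2 * (D:ℝ) * (2 * x ^ (D+1))
        ≤ 4 * r₂ / (n:ℝ) := by
      rw [hxpow]
      have hNpow : (n:ℝ) ^ (D+1) = (n:ℝ) ^ D * (n:ℝ) := pow_succ _ _
      have hkey := key_ineq hd2 hr0 hre
      have lhs_eq : ((n:ℝ) ^ D / (D.factorial : ℝ)) * 2 * (D:ℝ)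
          * (2 * (r₂ ^ (D+1) * (D:ℝ) ^ (D+1) / (n:ℝ) ^ (D+1)))
          = 4 * (r₂ ^ (D+1) * (D:ℝ) ^ (D+2)) / ((D.factorial : ℝ) * (n:ℝ)) := by
        rw [hNpow, pow_succ ((D:ℝ)) (D+1)]
        field_simp
        ring
      rw [lhs_eq]
      calc 4 * (r₂ ^ (D+1) * (D:ℝ) ^ (D+2)) / ((D.factorial : ℝ) * (n:ℝ))
          ≤ 4 * (r₂ * (D.factorial : ℝ)) / ((D.factorial : ℝ) * (n:ℝ)) := by
            gcongr
        _ = 4 * r₂ / (n:ℝ) := by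
            field_simp
    calc FF n D (Real.sqrt (1 - t)) 1
        ≤ ((n:ℝ) ^ D / (D.factorial : ℝ)) * 2 * (D:ℝ) * (2 * x ^ (D+1)) := step1
      _ ≤ 4 * r₂ / (n:ℝ) := step2
  have hnonneg : ∀ᶠ n in atTop, 0 ≤ FF n (d n)
      (Real.sqrt (1 - (r₂ * (d n : ℝ) / (n : ℝ)) ^
        (2 * ((d n : ℝ) + 1) / ((d n : ℝ) - 1) ^ 2))) 1 := by
    filter_upwards [hd] with n hn
    obtain ⟨hd2, hdn⟩ := hn
    set D := d n with hD
    have hD2 : (2:ℝ) ≤ (D:ℝ) := by exact_mod_cast hd2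
    have hN : (0:ℝ) < (n:ℝ) := by
      have : 0 < n := by omega
      exact_mod_cast this
    have hDN : (D:ℝ) < (n:ℝ) := by exact_mod_cast hdn
    set x : ℝ := r₂ * (D : ℝ) / (n : ℝ) with hx
    have hx0 : 0 < x := by rw [hx]; positivity
    have hx1 : x < 1 := by
      rw [hx, div_lt_one hN]
      nlinarith
    set e₀ : ℝ := 2 * ((D : ℝ) + 1) / ((D : ℝ) - 1) ^ 2 with he0
    have he0pos : 0 < e₀ := by
      rw [he0]; apply div_pos (by linarith) (by nlinarith)
    have ht0 : 0 < x ^ e₀ := Real.rpow_pos_of_pos hx0 _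
    have ht1 : x ^ e₀ ≤ 1 := Real.rpow_le_one hx0.le hx1.le he0pos.le
    apply mul_nonneg (mul_nonneg (mul_nonneg (by positivity) (by norm_num))
      (c2_pos hd2).le)
    exact II_nonneg hd2 ht0.le ht1
  apply squeeze_zero' hnonneg hbound
  have : Tendsto (fun n : ℕ => 4 * r₂ / (n:ℝ)) atTop (nhds 0) :=
    tendsto_const_div_atTop_nhds_zero_nat (4 * r₂)
  exact this
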